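/- Let A, B, C ∈ ℝ² be affinely independent and let D = α·A + β·B + γ·C with α, β, γ > 0 and α + β + γ = 1 (D lies in the interior of triangle ABC). Let q(x, y) = a·x² + b·x·y + c·y² + d·x + e·y + f be a nonzero real polynomial vanishing at A, B, C and D whose associated symmetric matrix M = [[a, b/2, d/2], [b/2, c, e/2], [d/2, e/2, f]] is invertible (a nondegenerate conic). Then b² − 4ac > 0; that is, every nondegenerate conic circumscribed about a quadrangle of the second species is a hyperbola. -/
import Mathlib

/-- The value of the degree-≤2 polynomial `a·x² + b·x·y + c·y² + d·x + e·y + f` at a point of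
the plane. -/
noncomputable def conicEval (a b c d e f : ℝ) (P : EuclideanSpace ℝ (Fin 2)) : ℝ :=
  a * P 0 ^ 2 + b * P 0 * P 1 + c * P 1 ^ 2 + d * P 0 + e * P 1 + f

/-- If the discriminant is nonpositive, the quadratic form is semidefinite with the sign of
`a + c`. -/
lemma conic_semidef (a b c : ℝ) (hdisc : b ^ 2 - 4 * a * c ≤ 0) (x y : ℝ) :
    0 ≤ (a + c) * (a * x ^ 2 + b * x * y + c * y ^ 2) := by
  nlinarith [sq_nonneg (2 * a * x + b * y), sq_nonneg (b * x + 2 * c * y),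
    mul_nonneg (by linarith : (0:ℝ) ≤ 4 * a * c - b ^ 2)
      (by positivity : (0:ℝ) ≤ x ^ 2 + y ^ 2)]

/-- A sum of three nonnegative terms with positive coefficients vanishes only if each term
vanishes. -/
lemma sum3_eq_zero {cx cy cz x y z : ℝ} (hcx : 0 < cx) (hcy : 0 < cy) (hcz : 0 < cz)
    (hx : 0 ≤ x) (hy : 0 ≤ y) (hz : 0 ≤ z) (h : cx * x + cy * y + cz * z = 0) :
    x = 0 ∧ y = 0 ∧ z = 0 := by
  have h1 : 0 ≤ cx * x := mul_nonneg hcx.le hx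
  have h2 : 0 ≤ cy * y := mul_nonneg hcy.le hy
  have h3 : 0 ≤ cz * z := mul_nonneg hcz.le hz
  refine ⟨?_, ?_, ?_⟩
  · have : cx * x = 0 := le_antisymm (by linarith) h1
    exact (mul_eq_zero.mp this).resolve_left hcx.ne'
  · have : cy * y = 0 := le_antisymm (by linarith) h2
    exact (mul_eq_zero.mp this).resolve_left hcy.ne'
  · have : cz * z = 0 := le_antisymm (by linarith) h3
    exact (mul_eq_zero.mp this).resolve_left hcz.ne'

/-- A semidefinite quadratic form vanishing on two linearly independent vectors and their
difference is identically zero. -/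
lemma quadform_eq_zero (a b c p q r s : ℝ) (hdisc : b ^ 2 - 4 * a * c ≤ 0)
    (hcross : p * s - q * r ≠ 0)
    (h1 : a * p ^ 2 + b * p * q + c * q ^ 2 = 0)
    (h2 : a * r ^ 2 + b * r * s + c * s ^ 2 = 0)
    (h3 : a * (r - p) ^ 2 + b * (r - p) * (s - q) + c * (s - q) ^ 2 = 0) :
    a = 0 ∧ b = 0 ∧ c = 0 := by
  have hcr2 : (p * s - q * r) ^ 2 ≠ 0 := pow_ne_zero _ hcross
  have hBmix : 2 * a * p * r + b * (p * s + q * r) + 2 * c * q * s = 0 := by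
    linear_combination h1 + h2 - h3
  have ha : a = 0 := by
    have h : a * (p * s - q * r) ^ 2 = 0 := by
      linear_combination s ^ 2 * h1 + q ^ 2 * h2 - q * s * hBmix
    exact (mul_eq_zero.mp h).resolve_right hcr2
  have hc : c = 0 := by
    have h : c * (p * s - q * r) ^ 2 = 0 := by
      linear_combination r ^ 2 * h1 + p ^ 2 * h2 - p * r * hBmix
    exact (mul_eq_zero.mp h).resolve_right hcr2
  have hb2 : b ^ 2 = 0 := by nlinarith [sq_nonneg b]
  exact ⟨ha, pow_eq_zero_iff (two_ne_zero) |>.mp hb2, hc⟩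

/-- If the trace `a + c` vanishes together with the discriminant condition, the quadratic part
is zero. -/
lemma trace_zero_case (a b c : ℝ) (hdisc : b ^ 2 - 4 * a * c ≤ 0) (hac : a + c = 0) :
    a = 0 ∧ b = 0 ∧ c = 0 := by
  have hc' : c = -a := by linarith
  rw [hc'] at hdisc
  have ha2 : a ^ 2 = 0 := by nlinarith [sq_nonneg b, sq_nonneg a]
  have ha : a = 0 := pow_eq_zero_iff (two_ne_zero) |>.mp ha2
  have hc : c = 0 := by linarith
  have hb2 : b ^ 2 = 0 := by nlinarith [sq_nonneg b]
  exact ⟨ha, pow_eq_zero_iff (two_ne_zero) |>.mp hb2, hc⟩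

/-- Affine independence of three points in the plane gives a nonzero cross product. -/
lemma cross_ne_zero (A B C : EuclideanSpace ℝ (Fin 2))
    (h : AffineIndependent ℝ ![A, B, C]) :
    (B 0 - A 0) * (C 1 - A 1) - (B 1 - A 1) * (C 0 - A 0) ≠ 0 := by
  intro hcr
  rw [affineIndependent_iff] at h
  set p := B 0 - A 0 with hp
  set q := B 1 - A 1 with hq
  set r := C 0 - A 0 with hr
  set s := C 1 - A 1 with hs
  obtain ⟨t1, t2, h1, h2, hne⟩ :
      ∃ t1 t2 : ℝ, t1 * p + t2 * r = 0 ∧ t1 * q + t2 * s = 0 ∧ ¬(t1 = 0 ∧ t2 = 0) := by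
    by_cases hqs : q = 0 ∧ s = 0
    · by_cases hpr : p = 0 ∧ r = 0
      · exact ⟨1, 0, by rw [hpr.1, hpr.2]; ring, by rw [hqs.1, hqs.2]; ring, by simp⟩
      · refine ⟨r, -p, by ring, by rw [hqs.1, hqs.2]; ring, fun hc => hpr ?_⟩
        exact ⟨by linarith [neg_eq_zero.mp hc.2], hc.1⟩
    · refine ⟨s, -q, by linear_combination hcr, by ring, fun hc => hqs ?_⟩
      exact ⟨by linarith [neg_eq_zero.mp hc.2], hc.1⟩
  have hzero : ∑ e : Fin 3, (![-(t1 + t2), t1, t2] : Fin 3 → ℝ) e • (![A, B, C] e) = 0 := by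
    simp only [Fin.sum_univ_three, Matrix.cons_val_zero, Matrix.cons_val_one, Matrix.head_cons,
      Matrix.cons_val_two, Matrix.tail_cons]
    ext i
    fin_cases i <;>
      simp only [Fin.mk_zero, Fin.mk_one, Fin.isValue, PiLp.add_apply, PiLp.smul_apply,
        PiLp.zero_apply, smul_eq_mul]
    · linear_combination h1
    · linear_combination h2
  have hwsum : ∑ e : Fin 3, (![-(t1 + t2), t1, t2] : Fin 3 → ℝ) e = 0 := by
    simp [Fin.sum_univ_three]
  have ht1 := h Finset.univ ![-(t1 + t2), t1, t2] hwsum hzero 1 (Finset.mem_univ _)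
  have ht2 := h Finset.univ ![-(t1 + t2), t1, t2] hwsum hzero 2 (Finset.mem_univ _)
  simp at ht1 ht2
  exact hne ⟨ht1, ht2⟩

/-- Every nondegenerate conic circumscribed about a complete quadrangle of the second species
(one vertex `D` interior to the triangle formed by the other three) is a hyperbola:
`b² - 4ac > 0`. -/
theorem conic_through_second_species_quadrangle_is_hyperbola
    (A B C D : EuclideanSpace ℝ (Fin 2)) (α β γ : ℝ)
    (hABC : AffineIndependent ℝ ![A, B, C])
    (hα : 0 < α) (hβ : 0 < β) (hγ : 0 < γ) (hsum : α + β + γ = 1)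
    (hD : D = α • A + β • B + γ • C)
    (a b c d e f : ℝ)
    (hq : (a, b, c, d, e, f) ≠ (0, 0, 0, 0, 0, 0))
    (hA : conicEval a b c d e f A = 0)
    (hB : conicEval a b c d e f B = 0)
    (hC : conicEval a b c d e f C = 0)
    (hDq : conicEval a b c d e f D = 0)
    -- the conic is nondegenerate: its associated symmetric matrix is invertible
    (hM : Matrix.det !![a, b / 2, d / 2; b / 2, c, e / 2; d / 2, e / 2, f] ≠ 0) :
    b ^ 2 - 4 * a * c > 0 := by
  by_contra hcon
  push_neg at hcon
  -- `hcon : b ^ 2 - 4 * a * c ≤ 0`; we derive `a = b = c = 0`, contradicting nondegeneracy.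
  have hcross := cross_ne_zero A B C hABC
  have hD0 : D 0 = α * A 0 + β * B 0 + γ * C 0 := by
    rw [hD]; simp [PiLp.add_apply, PiLp.smul_apply, smul_eq_mul]
  have hD1 : D 1 = α * A 1 + β * B 1 + γ * C 1 := by
    rw [hD]; simp [PiLp.add_apply, PiLp.smul_apply, smul_eq_mul]
  have hg : γ = 1 - α - β := by linarith
  subst hg
  simp only [conicEval] at hA hB hC hDq
  rw [hD0, hD1] at hDq
  have habc : a = 0 ∧ b = 0 ∧ c = 0 := by
    by_cases hac : a + c = 0
    · exact trace_zero_case a b c hcon hac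
    · -- the fundamental identity: the weighted sum of the quadratic form on the edge vectors
      -- vanishes
      have hS : α * β * ((a + c) * (a * (B 0 - A 0) ^ 2 + b * (B 0 - A 0) * (B 1 - A 1)
            + c * (B 1 - A 1) ^ 2))
          + α * (1 - α - β) * ((a + c) * (a * (C 0 - A 0) ^ 2 + b * (C 0 - A 0) * (C 1 - A 1)
            + c * (C 1 - A 1) ^ 2))
          + β * (1 - α - β) * ((a + c) * (a * (C 0 - B 0) ^ 2 + b * (C 0 - B 0) * (C 1 - B 1)
            + c * (C 1 - B 1) ^ 2)) = 0 := by
        linear_combination (a + c) * (α * hA + β * hB + (1 - α - β) * hC - hDq)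
      have hγ' : 0 < 1 - α - β := hγ
      obtain ⟨z1, z2, z3⟩ := sum3_eq_zero (mul_pos hα hβ) (mul_pos hα hγ') (mul_pos hβ hγ')
        (conic_semidef a b c hcon _ _) (conic_semidef a b c hcon _ _)
        (conic_semidef a b c hcon _ _) hS
      have q1 : a * (B 0 - A 0) ^ 2 + b * (B 0 - A 0) * (B 1 - A 1) + c * (B 1 - A 1) ^ 2 = 0 :=
        (mul_eq_zero.mp z1).resolve_left hac
      have q2 : a * (C 0 - A 0) ^ 2 + b * (C 0 - A 0) * (C 1 - A 1) + c * (C 1 - A 1) ^ 2 = 0 :=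
        (mul_eq_zero.mp z2).resolve_left hac
      have q3 : a * (C 0 - B 0) ^ 2 + b * (C 0 - B 0) * (C 1 - B 1) + c * (C 1 - B 1) ^ 2 = 0 :=
        (mul_eq_zero.mp z3).resolve_left hac
      exact quadform_eq_zero a b c (B 0 - A 0) (B 1 - A 1) (C 0 - A 0) (C 1 - A 1) hcon hcross
        q1 q2 (by linear_combination q3)
  obtain ⟨ha, hb, hc⟩ := habc
  apply hM
  rw [ha, hb, hc]
  norm_num [Matrix.det_fin_three]
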